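/- There exists an integer T₀ such that for every integer T ≥ T₀ the following hold: (i) √(K̂β)·cos(π/(T+1)) + √((K̂·cos²(π/(T+1)) − K̄)·β) ≤ √(ρ(A_T)) ≤ √(K̂β) + √((K̂ − K̄)·β); and (ii) r ≤ √(ρ(A_T)·K̂·β). -/

import Mathlib

noncomputable section

/-- The spectral radius of a real square matrix: the maximum modulus of its
complex eigenvalues. -/
def specRad {n : ℕ} (A : Matrix (Fin n) (Fin n) ℝ) : ℝ :=
  sSup {x : ℝ | ∃ μ : ℂ, μ ∈ spectrum ℂ (A.map Complex.ofReal) ∧ x = ‖μ‖}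

/-- `L̄ = L₁ / (1 - β K₁ / 2)`. -/
def Lbar (L1 K1 β : ℝ) : ℝ := L1 / (1 - β * K1 / 2)

/-- `K̄ = 3K₁/2 + K₁ L̄ / (2 ρ (1 - β))`. -/
def Kbar (L1 K1 rho β : ℝ) : ℝ := 3 * K1 / 2 + K1 * Lbar L1 K1 β / (2 * rho * (1 - β))

/-- `K̂ = K̄ + K₁ L̄ / ρ`. -/
def Khat (L1 K1 rho β : ℝ) : ℝ := Kbar L1 K1 rho β + K1 * Lbar L1 K1 β / rho

/-- `r = K̄ β + (K₁/ρ) L₁ β`. -/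
def rconst (L1 K1 rho β : ℝ) : ℝ := Kbar L1 K1 rho β * β + (K1 / rho) * L1 * β

/-- The `T × T` matrix `A_T` (1-based indices `1 ≤ i, j ≤ T` correspond to `0`-based
`Fin T` values `i-1, j-1`): entry `K̄ + L̄K₁/ρ` if `j = i - 1`, entry `(L̄K₁/ρ) β^(j-i+1)`
if `i - 1 < j ≤ T - 1`, entry `(L₁K₁/ρ) β^(T-i+1)` if `j = T`, and `0` if `j < i - 1`. -/
def AT (L1 K1 rho β : ℝ) (T : ℕ) : Matrix (Fin T) (Fin T) ℝ :=
  fun i j =>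
    if (j : ℕ) + 1 = T then (L1 * K1 / rho) * β ^ (T - (i : ℕ))
    else if (j : ℕ) + 1 = (i : ℕ) then Kbar L1 K1 rho β + Lbar L1 K1 β * K1 / rho
    else if (i : ℕ) ≤ (j : ℕ) then (Lbar L1 K1 β * K1 / rho) * β ^ ((j : ℕ) - (i : ℕ) + 1)
    else 0

end

/-!
`A_T` is entrywise nonnegative, so its spectral radius is squeezed by Collatz–Wielandt bounds:
`A x ≤ λ x` for a positive vector `x` gives `ρ(A) ≤ λ` (compare an eigenvector with `x`), and
`λ x ≤ A x` gives `λ ≤ ρ(A)` (Gelfand's formula, since then `‖A^n‖ ≳ λ^n`).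

For the upper bound take `x_j = s^j`: the row sums of `A_T x` are at most
`(K̂/s + (K̂ - K̄)β/(1 - βs)) x_i`, and the minimum over `s` is `(√(K̂β) + √((K̂ - K̄)β))²`.
For the lower bound, the eigen-equation of `A_T` telescopes to the three-term recurrence
`βλ y_{n+2} = (λ + βK̄) y_{n+1} - K̂ y_n` for `x_j = y_{j+1}`; with `θ = π/(T+1)` and
`λ = (√(K̂β) cos θ + √((K̂ cos²θ - K̄)β))²` it is solved by `y_n = t^n sin(nθ)`, which is positive
for `1 ≤ n ≤ T` and vanishes at `n = 0` and `n = T + 1`. Once `cos²θ ≥ (K̂ + K̄)/(2K̂)` this `λ`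
is at least `K̂β ≥ r`, which gives (ii).
-/

open Finset Filter Topology Real

attribute [local instance] Matrix.linftyOpNormedRing Matrix.linftyOpNormedAlgebra

namespace Matrix

variable {ι : Type*} [Fintype ι]

lemma mulVec_mono_of_nonneg {A : Matrix ι ι ℝ} (hA : ∀ i j, 0 ≤ A i j) {x y : ι → ℝ}
    (h : x ≤ y) : A *ᵥ x ≤ A *ᵥ y :=
  fun i => sum_le_sum fun j _ => mul_le_mul_of_nonneg_left (h j) (hA i j)

lemma norm_eigenvalue_le_of_mulVec_le {A : Matrix ι ι ℝ} (hA : ∀ i j, 0 ≤ A i j) {x : ι → ℝ}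
    (hx : ∀ i, 0 < x i) {lam : ℝ}
    (h : A *ᵥ x ≤ lam • x) {μ : ℂ} {v : ι → ℂ} (hv : v ≠ 0)
    (hμ : A.map Complex.ofReal *ᵥ v = μ • v) : ‖μ‖ ≤ lam := by
  obtain ⟨k, hk⟩ := Function.ne_iff.mp hv
  obtain ⟨i, -, hi⟩ := exists_max_image univ (fun j => ‖v j‖ / x j) ⟨k, mem_univ k⟩
  set m := ‖v i‖ / x i
  have hm : 0 < m := (div_pos (norm_pos_iff.mpr hk) (hx k)).trans_le (hi k (mem_univ k))
  have hvi : ‖v i‖ = m * x i := (div_mul_cancel₀ _ (hx i).ne').symm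
  have hv_le : ∀ j, ‖v j‖ ≤ m * x j := fun j => (div_le_iff₀ (hx j)).mp (hi j (mem_univ j))
  have key : ‖μ‖ * ‖v i‖ ≤ lam * ‖v i‖ :=
    calc ‖μ‖ * ‖v i‖ = ‖∑ j, (A i j : ℂ) * v j‖ := by
          rw [← norm_mul, ← smul_eq_mul, ← Pi.smul_apply, ← hμ]; rfl
      _ ≤ ∑ j, A i j * ‖v j‖ := (norm_sum_le _ _).trans_eq <| sum_congr rfl fun j _ => by
          rw [norm_mul, Complex.norm_real, Real.norm_of_nonneg (hA i j)]
      _ ≤ ∑ j, A i j * (m * x j) :=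
          sum_le_sum fun j _ => mul_le_mul_of_nonneg_left (hv_le j) (hA i j)
      _ = m * (A *ᵥ x) i := by
          simp only [mulVec, dotProduct, mul_sum]; exact sum_congr rfl fun j _ => by ring
      _ ≤ m * (lam * x i) := mul_le_mul_of_nonneg_left (h i) hm.le
      _ = lam * ‖v i‖ := by rw [hvi]; ring
  exact le_of_mul_le_mul_right key (hvi ▸ mul_pos hm (hx i))

variable [DecidableEq ι]

lemma pow_smul_le_pow_mulVec {A : Matrix ι ι ℝ} (hA : ∀ i j, 0 ≤ A i j)
    {x : ι → ℝ} {lam : ℝ} (hlam : 0 ≤ lam) (h : lam • x ≤ A *ᵥ x) (n : ℕ) :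
    lam ^ n • x ≤ (A ^ n) *ᵥ x := by
  induction n with
  | zero => simp
  | succ n ih =>
    calc lam ^ (n + 1) • x = lam ^ n • lam • x := by rw [pow_succ, mul_smul]
      _ ≤ lam ^ n • (A *ᵥ x) := smul_le_smul_of_nonneg_left h (pow_nonneg hlam n)
      _ = A *ᵥ (lam ^ n • x) := (mulVec_smul _ _ _).symm
      _ ≤ A *ᵥ ((A ^ n) *ᵥ x) := mulVec_mono_of_nonneg hA ih
      _ = (A ^ (n + 1)) *ᵥ x := by rw [mulVec_mulVec, pow_succ']

lemma linfty_opNorm_map_ofReal (A : Matrix ι ι ℝ) : ‖A.map Complex.ofReal‖ = ‖A‖ := by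
  simp only [linfty_opNorm_def, map_apply, Complex.nnnorm_real]

end Matrix

open Matrix

lemma spectrum.ofReal_le_spectralRadius_of_mul_pow_le_norm_pow {A : Type*} [NormedRing A]
    [NormedAlgebra ℂ A] [CompleteSpace A] (a : A) {c lam : ℝ} (hc : 0 < c) (hlam : 0 ≤ lam)
    (h : ∀ n : ℕ, c * lam ^ n ≤ ‖a ^ n‖) : ENNReal.ofReal lam ≤ spectralRadius ℂ a := by
  have hroot : ∀ n : ℕ, 1 ≤ n → (c * lam ^ n) ^ (1 / (n : ℝ)) = c ^ (1 / (n : ℝ)) * lam := by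
    intro n hn
    rw [Real.mul_rpow hc.le (by positivity), ← Real.rpow_natCast, ← Real.rpow_mul hlam,
      mul_one_div_cancel (by positivity), Real.rpow_one]
  have hc_root : Tendsto (fun n : ℕ => c ^ (1 / (n : ℝ))) atTop (𝓝 1) := by
    have := (Real.continuousAt_const_rpow hc.ne' (b := 0)).tendsto.comp
      tendsto_one_div_atTop_nhds_zero_nat
    rwa [Real.rpow_zero] at this
  have hlow : Tendsto (fun n : ℕ => ENNReal.ofReal ((c * lam ^ n) ^ (1 / (n : ℝ)))) atTop
      (𝓝 (ENNReal.ofReal lam)) := by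
    refine (ENNReal.continuous_ofReal.tendsto lam).comp ?_
    refine (tendsto_congr' ?_).mpr (by simpa only [one_mul] using hc_root.mul_const lam)
    filter_upwards [eventually_ge_atTop 1] with n hn using hroot n hn
  refine le_of_tendsto_of_tendsto' hlow
    (spectrum.pow_norm_pow_one_div_tendsto_nhds_spectralRadius a) fun n =>
      ENNReal.ofReal_le_ofReal (Real.rpow_le_rpow (by positivity) (h n) (by positivity))

lemma specRad_nonneg {n : ℕ} (A : Matrix (Fin n) (Fin n) ℝ) : 0 ≤ specRad A :=
  Real.sSup_nonneg <| by rintro _ ⟨μ, -, rfl⟩; exact norm_nonneg μ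

lemma specRad_le_of_mulVec_le {n : ℕ} {A : Matrix (Fin n) (Fin n) ℝ} (hA : ∀ i j, 0 ≤ A i j)
    {x : Fin n → ℝ} (hx : ∀ i, 0 < x i) {lam : ℝ} (hlam : 0 ≤ lam) (h : A *ᵥ x ≤ lam • x) :
    specRad A ≤ lam := by
  refine Real.sSup_le ?_ hlam
  rintro _ ⟨μ, hμ, rfl⟩
  rw [← Matrix.spectrum_toLin', ← Module.End.hasEigenvalue_iff_mem_spectrum] at hμ
  obtain ⟨v, hv⟩ := hμ.exists_hasEigenvector
  exact norm_eigenvalue_le_of_mulVec_le hA hx h hv.2 hv.apply_eq_smul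

lemma spectralRadius_map_ofReal_le_specRad {n : ℕ} (A : Matrix (Fin n) (Fin n) ℝ) :
    spectralRadius ℂ (A.map Complex.ofReal) ≤ ENNReal.ofReal (specRad A) := by
  have hbdd : BddAbove {x : ℝ | ∃ μ : ℂ, μ ∈ spectrum ℂ (A.map Complex.ofReal) ∧ x = ‖μ‖} :=
    ((finite_spectrum _).image (‖·‖)).bddAbove.mono <| by rintro _ ⟨μ, hμ, rfl⟩; exact ⟨μ, hμ, rfl⟩
  refine iSup₂_le fun μ hμ => ?_
  rw [← enorm_eq_nnnorm, ← ofReal_norm]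
  exact ENNReal.ofReal_le_ofReal (le_csSup hbdd ⟨μ, hμ, rfl⟩)

lemma le_specRad_of_smul_le_mulVec {n : ℕ} (hn : 0 < n) {A : Matrix (Fin n) (Fin n) ℝ}
    (hA : ∀ i j, 0 ≤ A i j) {x : Fin n → ℝ} (hx : ∀ i, 0 < x i) {lam : ℝ} (hlam : 0 ≤ lam)
    (h : lam • x ≤ A *ᵥ x) : lam ≤ specRad A := by
  set i₀ : Fin n := ⟨0, hn⟩
  have hx_norm : 0 < ‖x‖ := (hx i₀).trans_le <| (Real.le_norm_self _).trans (norm_le_pi_norm x i₀)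
  have hpow : ∀ k : ℕ, x i₀ / ‖x‖ * lam ^ k ≤ ‖A.map Complex.ofReal ^ k‖ := by
    intro k
    have hmap : A.map Complex.ofReal ^ k = (A ^ k).map Complex.ofReal :=
      (A.map_pow Complex.ofRealHom k).symm
    rw [hmap, linfty_opNorm_map_ofReal, div_mul_eq_mul_div,
      div_le_iff₀ hx_norm]
    calc x i₀ * lam ^ k = (lam ^ k • x) i₀ := by rw [Pi.smul_apply, smul_eq_mul, mul_comm]
      _ ≤ ((A ^ k) *ᵥ x) i₀ := pow_smul_le_pow_mulVec hA hlam h k i₀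
      _ ≤ ‖(A ^ k) *ᵥ x‖ := (Real.le_norm_self _).trans (norm_le_pi_norm _ i₀)
      _ ≤ ‖A ^ k‖ * ‖x‖ := linfty_opNorm_mulVec _ _
  have := (spectrum.ofReal_le_spectralRadius_of_mul_pow_le_norm_pow _ (div_pos (hx i₀) hx_norm)
    hlam hpow).trans (spectralRadius_map_ofReal_le_specRad A)
  exact (ENNReal.ofReal_le_ofReal_iff (specRad_nonneg A)).mp this

lemma mul_sum_pow_succ_mul_eq_sub {R : Type*} [CommRing R] {c β : R} {y D : ℕ → R}
    (h : ∀ n, c * β * y (n + 1) = D n - β * D (n + 1)) (i m : ℕ) :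
    c * ∑ k ∈ range m, β ^ (k + 1) * y (i + k + 1) = D i - β ^ m * D (i + m) := by
  induction m with
  | zero => simp
  | succ m ih =>
    rw [sum_range_succ, mul_add, ih, ← add_assoc i m 1]
    linear_combination β ^ m * h (i + m)

lemma pow_mul_sin_nat_mul_add_two (t θ : ℝ) (n : ℕ) :
    t ^ (n + 2) * Real.sin ((n + 2 : ℕ) * θ)
      = 2 * t * Real.cos θ * (t ^ (n + 1) * Real.sin ((n + 1 : ℕ) * θ))
        - t ^ 2 * (t ^ n * Real.sin (n * θ)) := by
  have h₂ : ((n + 2 : ℕ) : ℝ) * θ = (n + 1 : ℕ) * θ + θ := by push_cast; ring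
  have h₀ : (n : ℝ) * θ = (n + 1 : ℕ) * θ - θ := by push_cast; ring
  rw [h₂, h₀, Real.sin_add, Real.sin_sub]
  ring

lemma cos_pi_div_natCast_add_one_pos {T : ℕ} (hT : 2 ≤ T) : 0 < Real.cos (π / (T + 1)) := by
  have hT' : (2 : ℝ) ≤ T := by exact_mod_cast hT
  refine Real.cos_pos_of_mem_Ioo ⟨by linarith [div_pos Real.pi_pos (by positivity : (0:ℝ) < T + 1),
    Real.pi_pos], ?_⟩
  rw [div_lt_div_iff₀ (by positivity) two_pos]
  nlinarith [Real.pi_pos]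

lemma sin_natCast_mul_pi_div_pos {n T : ℕ} (hn : 1 ≤ n) (hnT : n ≤ T) :
    0 < Real.sin (n * (π / (T + 1))) := by
  have hn' : (1 : ℝ) ≤ n := by exact_mod_cast hn
  have hnT' : (n : ℝ) ≤ T := by exact_mod_cast hnT
  apply Real.sin_pos_of_pos_of_lt_pi (by positivity)
  rw [mul_div_assoc', div_lt_iff₀ (by positivity)]
  nlinarith [Real.pi_pos]

def geomBandMatrix (p q e β : ℝ) (T : ℕ) : Matrix (Fin T) (Fin T) ℝ :=
  fun i j =>
    if (j : ℕ) + 1 = T then e * β ^ (T - (i : ℕ))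
    else if (j : ℕ) + 1 = (i : ℕ) then p
    else if (i : ℕ) ≤ (j : ℕ) then q * β ^ ((j : ℕ) - (i : ℕ) + 1)
    else 0

lemma AT_eq_geomBandMatrix (L1 K1 rho β : ℝ) (T : ℕ) :
    AT L1 K1 rho β T = geomBandMatrix (Khat L1 K1 rho β) (Khat L1 K1 rho β - Kbar L1 K1 rho β)
      (L1 * K1 / rho) β T := by
  ext i j
  simp only [AT, geomBandMatrix, Khat]
  split_ifs <;> ring

section geomBandMatrix

variable {p q e β : ℝ} {T : ℕ}

lemma geomBandMatrix_nonneg (hp : 0 ≤ p) (hq : 0 ≤ q) (he : 0 ≤ e) (hβ : 0 ≤ β) (i j : Fin T) :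
    0 ≤ geomBandMatrix p q e β T i j := by
  unfold geomBandMatrix
  split_ifs <;> positivity

lemma geomBandMatrix_mulVec (f : ℕ → ℝ) (i : Fin T) :
    (geomBandMatrix p q e β T *ᵥ fun j => f j) i =
      (if (i : ℕ) = 0 then 0 else p * f (i - 1))
        + q * ∑ k ∈ range (T - 1 - i), β ^ (k + 1) * f (i + k)
        + e * β ^ (T - i) * f (T - 1) := by
  obtain ⟨i, hi⟩ := i
  obtain ⟨n, rfl⟩ : ∃ n, T = n + 1 := ⟨T - 1, by omega⟩
  obtain ⟨m, rfl⟩ : ∃ m, n = i + m := ⟨n - i, by omega⟩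
  simp only [mulVec, dotProduct, geomBandMatrix]
  rw [Fin.sum_univ_eq_sum_range (fun j => (if j + 1 = i + m + 1 then e * β ^ (i + m + 1 - i)
    else if j + 1 = i then p else if i ≤ j then q * β ^ (j - i + 1) else 0) * f j),
    sum_range_succ, sum_range_add]
  have hsub : ∑ x ∈ range i, (if x + 1 = i + m + 1 then e * β ^ (i + m + 1 - i)
      else if x + 1 = i then p else if i ≤ x then q * β ^ (x - i + 1) else 0) * f x
      = if i = 0 then 0 else p * f (i - 1) := by
    rw [sum_congr rfl fun x hx => show _ = if x + 1 = i then p * f x else 0 by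
      have := mem_range.mp hx; split_ifs <;> first | omega | simp]
    cases i <;> simp
  have hband : ∑ x ∈ range m, (if i + x + 1 = i + m + 1 then e * β ^ (i + m + 1 - i)
      else if i + x + 1 = i then p else if i ≤ i + x then q * β ^ (i + x - i + 1) else 0)
        * f (i + x)
      = q * ∑ x ∈ range m, β ^ (x + 1) * f (i + x) := by
    rw [mul_sum]
    refine sum_congr rfl fun x hx => ?_
    have := mem_range.mp hx
    rw [if_neg (by omega), if_neg (by omega), if_pos (by omega), Nat.add_sub_cancel_left, mul_assoc]
  rw [hsub, hband, if_pos rfl, Nat.add_sub_cancel, Nat.add_sub_cancel_left]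

lemma geomBandMatrix_mulVec_pow_le (hp : 0 ≤ p) (hq : 0 ≤ q) (he : e ≤ q) (hβ : 0 ≤ β)
    {s : ℝ} (hs : 0 < s) (hβs : β * s < 1) (i : Fin T) :
    (geomBandMatrix p q e β T *ᵥ fun j => s ^ (j : ℕ)) i
      ≤ (p / s + q * β / (1 - β * s)) * s ^ (i : ℕ) := by
  rw [geomBandMatrix_mulVec (s ^ ·)]
  obtain ⟨i, hi⟩ := i
  obtain ⟨m, hm⟩ : ∃ m, T - 1 - i = m := ⟨_, rfl⟩
  rw [hm, show T - i = m + 1 by omega, show T - 1 = i + m by omega]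
  have hsub : (if i = 0 then 0 else p * s ^ (i - 1)) ≤ p / s * s ^ i := by
    split_ifs with h
    · positivity
    · obtain ⟨j, rfl⟩ := Nat.exists_eq_add_one_of_ne_zero h
      rw [Nat.add_sub_cancel, pow_succ]
      exact le_of_eq (by field_simp)
  have hgeom : ∑ k ∈ range (m + 1), (β * s) ^ k ≤ 1 / (1 - β * s) := by
    have := geom_sum_Ico_le_of_lt_one (m := 0) (n := m + 1) (x := β * s) (by positivity) hβs
    rwa [← range_eq_Ico, pow_zero] at this
  have hband : q * ∑ k ∈ range m, β ^ (k + 1) * s ^ (i + k) + e * β ^ (m + 1) * s ^ (i + m)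
      ≤ q * β / (1 - β * s) * s ^ i :=
    calc _ ≤ q * ∑ k ∈ range m, β ^ (k + 1) * s ^ (i + k) + q * β ^ (m + 1) * s ^ (i + m) := by
          gcongr
      _ = q * β * s ^ i * ∑ k ∈ range (m + 1), (β * s) ^ k := by
          rw [sum_range_succ, mul_add, mul_sum, mul_sum]
          congr 1
          · exact sum_congr rfl fun k _ => by ring
          · ring
      _ ≤ q * β * s ^ i * (1 / (1 - β * s)) := by gcongr
      _ = q * β / (1 - β * s) * s ^ i := by ring
  linarith

lemma specRad_geomBandMatrix_le (hp : 0 < p) (hq : 0 < q) (he₀ : 0 ≤ e) (he : e ≤ q) (hβ : 0 < β) :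
    specRad (geomBandMatrix p q e β T) ≤ (√(p * β) + √(q * β)) ^ 2 := by
  set a := √(p * β)
  set b := √(q * β)
  have ha : 0 < a := Real.sqrt_pos.mpr (by positivity)
  have hb : 0 < b := Real.sqrt_pos.mpr (by positivity)
  have ha2 : a ^ 2 = p * β := Real.sq_sqrt (by positivity)
  have hb2 : b ^ 2 = q * β := Real.sq_sqrt (by positivity)
  set s := a / (β * (a + b))
  have hs : 0 < s := by positivity
  have hβs : β * s = a / (a + b) := by simp only [s]; field_simp
  have h1βs : 1 - β * s = b / (a + b) := by rw [hβs]; field_simp; ring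
  have hmin : p / s + q * β / (1 - β * s) = (a + b) ^ 2 := by
    rw [h1βs, show p / s = p * β * (a + b) / a by simp only [s]; field_simp, ← ha2, ← hb2]
    field_simp
  refine specRad_le_of_mulVec_le (geomBandMatrix_nonneg hp.le hq.le he₀ hβ.le)
    (x := fun j => s ^ (j : ℕ)) (fun i => pow_pos hs _) (by positivity) fun i => ?_
  rw [← hmin]
  exact geomBandMatrix_mulVec_pow_le hp.le hq.le he hβ.le hs
    (by rw [hβs, div_lt_one (by positivity)]; linarith) i

lemma smul_le_geomBandMatrix_mulVec_of_rec (hqp : q ≤ p) (he : 0 ≤ e) (hβ : 0 ≤ β) {lam : ℝ}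
    {y : ℕ → ℝ} (hy₀ : y 0 = 0) (hyT : 0 ≤ y T) (hyT₁ : y (T + 1) = 0)
    (hrec : ∀ n, β * lam * y (n + 2) = (lam + β * (p - q)) * y (n + 1) - p * y n) :
    lam • (fun j : Fin T => y (j + 1)) ≤ geomBandMatrix p q e β T *ᵥ fun j => y (j + 1) := by
  intro i
  rw [geomBandMatrix_mulVec (fun j => y (j + 1))]
  obtain ⟨i, hi⟩ := i
  obtain ⟨m, hm⟩ : ∃ m, T - 1 - i = m := ⟨_, rfl⟩
  rw [hm, show T - i = m + 1 by omega, show T - 1 + 1 = T by omega]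
  set D : ℕ → ℝ := fun n => lam * y (n + 1) - p * y n
  have htel := mul_sum_pow_succ_mul_eq_sub (c := q) (β := β) (y := y) (D := D)
    (fun n => by simp only [D]; linear_combination hrec n) i m
  have hD : D (i + m) = -(β * (p - q) * y T) := by
    have := hrec (i + m)
    rw [show i + m + 2 = T + 1 by omega, show i + m + 1 = T by omega, hyT₁] at this
    simp only [D, show i + m + 1 = T by omega]
    linear_combination -this
  have hsub : (if i = 0 then 0 else p * y (i - 1 + 1)) = p * y i := by
    split_ifs with h
    · rw [h, hy₀, mul_zero]
    · rw [Nat.sub_add_cancel (Nat.one_le_iff_ne_zero.mpr h)]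
  simp only [Pi.smul_apply, smul_eq_mul]
  rw [hsub, htel, hD]
  simp only [D]
  nlinarith [mul_nonneg (pow_nonneg hβ m) (mul_nonneg (mul_nonneg hβ (sub_nonneg.mpr hqp)) hyT),
    mul_nonneg he (mul_nonneg (pow_nonneg hβ (m + 1)) hyT)]

lemma le_specRad_geomBandMatrix (hT : 2 ≤ T) (hp : 0 < p) (hq : 0 ≤ q) (hqp : q ≤ p) (he : 0 ≤ e)
    (hβ : 0 < β) (hcos : p - q ≤ p * Real.cos (π / (T + 1)) ^ 2) :
    (√(p * β) * Real.cos (π / (T + 1)) + √((p * Real.cos (π / (T + 1)) ^ 2 - (p - q)) * β)) ^ 2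
      ≤ specRad (geomBandMatrix p q e β T) := by
  set θ := π / (T + 1)
  set a := √(p * β)
  set d := √((p * Real.cos θ ^ 2 - (p - q)) * β)
  have ha : 0 < a := Real.sqrt_pos.mpr (by positivity)
  have ha2 : a ^ 2 = p * β := Real.sq_sqrt (by positivity)
  have hd2 : d ^ 2 = (p * Real.cos θ ^ 2 - (p - q)) * β :=
    Real.sq_sqrt (mul_nonneg (sub_nonneg.mpr hcos) hβ.le)
  have hcosθ : 0 < Real.cos θ := cos_pi_div_natCast_add_one_pos hT
  have had : 0 < a * Real.cos θ + d := by positivity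
  set lam := (a * Real.cos θ + d) ^ 2
  set t := a / (β * (a * Real.cos θ + d))
  set y : ℕ → ℝ := fun n => t ^ n * Real.sin (n * θ)
  have hlam_t : β * lam * t = a * (a * Real.cos θ + d) := by simp only [lam, t]; field_simp
  have hrec (n : ℕ) : β * lam * y (n + 2) = (lam + β * (p - q)) * y (n + 1) - p * y n := by
    have hp_t : β * lam * t ^ 2 = p := by
      rw [sq t, ← mul_assoc, hlam_t]; simp only [t]; field_simp
      linear_combination ha2
    have hsum : β * lam * (2 * t * Real.cos θ) = lam + β * (p - q) := by
      rw [show β * lam * (2 * t * Real.cos θ) = 2 * Real.cos θ * (β * lam * t) by ring, hlam_t]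
      simp only [lam]
      linear_combination -hd2 + Real.cos θ ^ 2 * ha2
    simp only [y]
    rw [pow_mul_sin_nat_mul_add_two, ← hsum, ← hp_t]
    push_cast
    ring
  have hyT₁ : y (T + 1) = 0 := by
    simp only [y]
    rw [show ((T + 1 : ℕ) : ℝ) * θ = π by simp only [θ]; push_cast; field_simp, Real.sin_pi,
      mul_zero]
  have hypos (n : ℕ) (h₁ : 1 ≤ n) (hn : n ≤ T) : 0 < y n :=
    mul_pos (pow_pos (by positivity) n) (sin_natCast_mul_pi_div_pos h₁ hn)
  exact le_specRad_of_smul_le_mulVec (by omega) (geomBandMatrix_nonneg hp.le hq he hβ.le)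
    (fun i => hypos _ (by omega) i.isLt) (by positivity)
    (smul_le_geomBandMatrix_mulVec_of_rec hqp he hβ.le (by simp [y]) (hypos T (by omega) le_rfl).le
      hyT₁ hrec)

end geomBandMatrix

lemma eventually_le_cos_pi_div_sq {x : ℝ} (hx : x < 1) :
    ∀ᶠ T : ℕ in atTop, x ≤ Real.cos (π / (T + 1)) ^ 2 := by
  have hθ : Tendsto (fun T : ℕ => π / ((T : ℝ) + 1)) atTop (𝓝 0) := by
    simpa [div_eq_mul_one_div π] using tendsto_one_div_add_atTop_nhds_zero_nat.const_mul π
  have hcos := ((Real.continuous_cos.tendsto 0).comp hθ).pow 2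
  rw [Real.cos_zero, one_pow] at hcos
  exact hcos.eventually (eventually_ge_nhds hx)

lemma mul_le_sq_sqrt_mul_mul_add_sqrt {k k' β c : ℝ} (hk : 0 ≤ k) (hβ : 0 ≤ β) (hc : 0 ≤ c)
    (hk' : k' ≤ k * c ^ 2) (h : k + k' ≤ 2 * k * c ^ 2) :
    k * β ≤ (√(k * β) * c + √((k * c ^ 2 - k') * β)) ^ 2 := by
  have ha := Real.sq_sqrt (mul_nonneg hk hβ)
  have hd := Real.sq_sqrt (mul_nonneg (sub_nonneg.mpr hk') hβ)
  have hcross : 0 ≤ √(k * β) * c * √((k * c ^ 2 - k') * β) := by positivity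
  nlinarith [mul_le_mul_of_nonneg_right h hβ]

lemma Lbar_pos {L1 K1 β : ℝ} (hL1 : 0 < L1) (hβK : β * K1 < 2) : 0 < Lbar L1 K1 β :=
  div_pos hL1 (by linarith)

lemma le_Lbar {L1 K1 β : ℝ} (hL1 : 0 ≤ L1) (hK1 : 0 ≤ K1) (hβ : 0 ≤ β) (hβK : β * K1 < 2) :
    L1 ≤ Lbar L1 K1 β := by
  rw [Lbar, le_div_iff₀ (by linarith)]
  nlinarith [mul_nonneg hL1 (mul_nonneg hβ hK1)]

lemma Kbar_pos {L1 K1 rho β : ℝ} (hL1 : 0 < L1) (hK1 : 0 < K1) (hrho : 0 < rho) (hβ1 : β < 1)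
    (hβK : β * K1 < 2) : 0 < Kbar L1 K1 rho β := by
  have := Lbar_pos hL1 hβK
  have : 0 < 1 - β := by linarith
  unfold Kbar
  positivity

lemma Khat_sub_Kbar (L1 K1 rho β : ℝ) :
    Khat L1 K1 rho β - Kbar L1 K1 rho β = K1 * Lbar L1 K1 β / rho :=
  add_sub_cancel_left _ _

lemma rconst_le_Khat_mul {L1 K1 rho β : ℝ} (hL1 : 0 ≤ L1) (hK1 : 0 ≤ K1) (hrho : 0 ≤ rho)
    (hβ : 0 ≤ β) (hβK : β * K1 < 2) : rconst L1 K1 rho β ≤ Khat L1 K1 rho β * β := by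
  rw [rconst, Khat, add_mul, div_mul_eq_mul_div]
  gcongr
  exact le_Lbar hL1 hK1 hβ hβK

/-- Asymptotic two-sided bound on `√(ρ(A_T))` and the bound `r ≤ √(ρ(A_T) K̂ β)`
for all sufficiently large horizons (Theorem 3.10). -/
theorem stmt9 (L1 K1 rho β : ℝ)
    (hL1 : 0 < L1) (hK1 : 0 < K1) (hrho : 0 < rho)
    (hβ0 : 0 < β) (hβ1 : β < 1) (hβK : β * K1 < 2) :
    ∃ T0 : ℕ, ∀ T : ℕ, T0 ≤ T →
      (Real.sqrt (Khat L1 K1 rho β * β) * Real.cos (Real.pi / ((T : ℝ) + 1))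
          + Real.sqrt ((Khat L1 K1 rho β * (Real.cos (Real.pi / ((T : ℝ) + 1))) ^ 2
              - Kbar L1 K1 rho β) * β)
        ≤ Real.sqrt (specRad (AT L1 K1 rho β T))
      ∧ Real.sqrt (specRad (AT L1 K1 rho β T))
        ≤ Real.sqrt (Khat L1 K1 rho β * β)
          + Real.sqrt ((Khat L1 K1 rho β - Kbar L1 K1 rho β) * β))
      ∧ rconst L1 K1 rho β
        ≤ Real.sqrt (specRad (AT L1 K1 rho β T) * Khat L1 K1 rho β * β) := by
  have hKbar := Kbar_pos hL1 hK1 hrho hβ1 hβK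
  have hq : 0 < Khat L1 K1 rho β - Kbar L1 K1 rho β := by
    rw [Khat_sub_Kbar]; have := Lbar_pos hL1 hβK; positivity
  have hKhat : 0 < Khat L1 K1 rho β := by linarith
  have he : L1 * K1 / rho ≤ Khat L1 K1 rho β - Kbar L1 K1 rho β := by
    rw [Khat_sub_Kbar, mul_comm K1]; gcongr; exact le_Lbar hL1.le hK1.le hβ0.le hβK
  have hlt_one : (Khat L1 K1 rho β + Kbar L1 K1 rho β) / (2 * Khat L1 K1 rho β) < 1 := by
    rw [div_lt_one (by positivity)]; linarith
  obtain ⟨T0, hT0⟩ := eventually_atTop.mp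
    ((eventually_le_cos_pi_div_sq hlt_one).and (eventually_ge_atTop 2))
  refine ⟨T0, fun T hT => ?_⟩
  obtain ⟨hcos, hT2⟩ := hT0 T hT
  rw [div_le_iff₀ (by positivity)] at hcos
  have hKbar_le : Kbar L1 K1 rho β ≤ Khat L1 K1 rho β * Real.cos (π / (T + 1)) ^ 2 := by linarith
  have hlow := le_specRad_geomBandMatrix (e := L1 * K1 / rho) hT2 hKhat hq.le (by linarith)
    (by positivity) hβ0 (by rwa [sub_sub_cancel])
  have hup := specRad_geomBandMatrix_le (T := T) hKhat hq (by positivity) he hβ0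
  rw [sub_sub_cancel, ← AT_eq_geomBandMatrix] at hlow
  rw [← AT_eq_geomBandMatrix] at hup
  have hKβ : Khat L1 K1 rho β * β ≤ specRad (AT L1 K1 rho β T) :=
    (mul_le_sq_sqrt_mul_mul_add_sqrt hKhat.le hβ0.le (cos_pi_div_natCast_add_one_pos hT2).le
      hKbar_le (by linarith)).trans hlow
  refine ⟨⟨(le_abs_self _).trans (Real.abs_le_sqrt hlow),
    (Real.sqrt_le_left (by positivity)).mpr hup⟩, ?_⟩
  refine (rconst_le_Khat_mul hL1.le hK1.le hrho.le hβ0.le hβK).trans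
    ((le_abs_self _).trans (Real.abs_le_sqrt ?_))
  nlinarith [mul_le_mul_of_nonneg_right hKβ (mul_pos hKhat hβ0).le]
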